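/- Let π : Lit_A → ℕ[X,X̄] be a model-compatible interpretation and let φ be a first-order sentence over 𝒱. Then φ is Mod_π-satisfiable (i.e., there exists a structure 𝔄 with universe A compatible with π such that 𝔄 ⊨ φ) if and only if π⟦φ⟧ ≠ 0. -/

import Mathlib

/-- A finite relational vocabulary: a type of relation symbols with arities. -/
structure Vocab : Type 1 where
  Rel : Type
  arity : Rel → ℕ

/-- First-order formulas over a relational vocabulary `𝒱` (with equality),
with variables from `Vars`.  Negated atoms are included as primitive literals. -/
inductive Formula (𝒱 : Vocab) (Vars : Type) : Type where
  | rel    : (R : 𝒱.Rel) → (Fin (𝒱.arity R) → Vars) → Formula 𝒱 Vars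
  | nrel   : (R : 𝒱.Rel) → (Fin (𝒱.arity R) → Vars) → Formula 𝒱 Vars
  | equal  : Vars → Vars → Formula 𝒱 Vars
  | nequal : Vars → Vars → Formula 𝒱 Vars
  | and    : Formula 𝒱 Vars → Formula 𝒱 Vars → Formula 𝒱 Vars
  | or     : Formula 𝒱 Vars → Formula 𝒱 Vars → Formula 𝒱 Vars
  | all    : Vars → Formula 𝒱 Vars → Formula 𝒱 Vars
  | ex     : Vars → Formula 𝒱 Vars → Formula 𝒱 Vars
  | not    : Formula 𝒱 Vars → Formula 𝒱 Vars

/-- A ground literal over vocabulary `𝒱` and universe `A`: a positive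
(`pos = true`) or negated (`pos = false`) ground atom `R(ā)`. -/
structure Lit (𝒱 : Vocab) (A : Type) where
  pos : Bool
  R : 𝒱.Rel
  args : Fin (𝒱.arity R) → A

/-- Negation of a literal (the negation of a literal is again a literal). -/
def Lit.neg {𝒱 : Vocab} {A : Type} (L : Lit 𝒱 A) : Lit 𝒱 A := ⟨!L.pos, L.R, L.args⟩

namespace Formula

variable {𝒱 : Vocab} {Vars : Type}

/-- Size of a formula (used for termination of the semiring semantics). -/
def size : Formula 𝒱 Vars → ℕ
  | rel _ _ => 1
  | nrel _ _ => 1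
  | equal _ _ => 1
  | nequal _ _ => 1
  | and φ ψ => φ.size + ψ.size + 1
  | or φ ψ => φ.size + ψ.size + 1
  | all _ φ => φ.size + 1
  | ex _ φ => φ.size + 1
  | not φ => φ.size + 1

mutual
/-- Negation normal form of a formula. -/
def nnf : Formula 𝒱 Vars → Formula 𝒱 Vars
  | rel R v => rel R v
  | nrel R v => nrel R v
  | equal x y => equal x y
  | nequal x y => nequal x y
  | and φ ψ => and φ.nnf ψ.nnf
  | or φ ψ => or φ.nnf ψ.nnf
  | all x φ => all x φ.nnf
  | ex x φ => ex x φ.nnf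
  | not φ => nnfNeg φ

/-- Negation normal form of the negation of a formula: `nnfNeg φ = nnf (¬φ)`. -/
def nnfNeg : Formula 𝒱 Vars → Formula 𝒱 Vars
  | rel R v => nrel R v
  | nrel R v => rel R v
  | equal x y => nequal x y
  | nequal x y => equal x y
  | and φ ψ => or (nnfNeg φ) (nnfNeg ψ)
  | or φ ψ => and (nnfNeg φ) (nnfNeg ψ)
  | all x φ => ex x (nnfNeg φ)
  | ex x φ => all x (nnfNeg φ)
  | not φ => nnf φ
end

theorem size_nnf_le (φ : Formula 𝒱 Vars) : φ.nnf.size ≤ φ.size ∧ (nnfNeg φ).size ≤ φ.size := by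
  induction φ <;> simp_all [nnf, nnfNeg, size] <;> omega

/-- Free variables of a formula. -/
def FV [DecidableEq Vars] : Formula 𝒱 Vars → Finset Vars
  | rel _ v => Finset.image v Finset.univ
  | nrel _ v => Finset.image v Finset.univ
  | equal x y => {x, y}
  | nequal x y => {x, y}
  | and φ ψ => φ.FV ∪ ψ.FV
  | or φ ψ => φ.FV ∪ ψ.FV
  | all x φ => φ.FV.erase x
  | ex x φ => φ.FV.erase x
  | not φ => φ.FV

end Formula

section Semantics

variable {𝒱 : Vocab} {Vars A K : Type} [DecidableEq Vars] [Fintype A] [DecidableEq A]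
  [CommSemiring K]

/-- The extension of a `K`-interpretation `π : Lit 𝒱 A → K` to first-order formulas,
relative to a valuation `ν : Vars → A`:  `eval π φ ν = π⟦φ⟧ν`. -/
def eval (π : Lit 𝒱 A → K) : Formula 𝒱 Vars → (Vars → A) → K
  | .rel R v, ν => π ⟨true, R, fun i => ν (v i)⟩
  | .nrel R v, ν => π ⟨false, R, fun i => ν (v i)⟩
  | .equal x y, ν => if ν x = ν y then 1 else 0
  | .nequal x y, ν => if ν x ≠ ν y then 1 else 0
  | .and φ ψ, ν => eval π φ ν * eval π ψ ν
  | .or φ ψ, ν => eval π φ ν + eval π ψ ν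
  | .all x φ, ν => ∏ a : A, eval π φ (Function.update ν x a)
  | .ex x φ, ν => ∑ a : A, eval π φ (Function.update ν x a)
  | .not φ, ν => eval π (Formula.nnfNeg φ) ν
termination_by φ _ => φ.size
decreasing_by
  all_goals simp [Formula.size]
  all_goals first
    | omega
    | exact Nat.lt_succ_of_le (Formula.size_nnf_le _).2
    | exact (Formula.size_nnf_le _).2

end Semantics

/-- A `𝒱`-structure with universe `A`: an interpretation of each relation symbol. -/
def Struc (𝒱 : Vocab) (A : Type) := (R : 𝒱.Rel) → (Fin (𝒱.arity R) → A) → Prop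

/-- Standard (Tarski) satisfaction of a literal in a structure. -/
def Struc.SatLit {𝒱 : Vocab} {A : Type} (𝔄 : Struc 𝒱 A) (L : Lit 𝒱 A) : Prop :=
  if L.pos then 𝔄 L.R L.args else ¬ 𝔄 L.R L.args

section Sat

variable {𝒱 : Vocab} {Vars A : Type} [DecidableEq Vars]

/-- Standard (Tarski) satisfaction relation `𝔄 ⊨ φ[ν]`. -/
def Sat (𝔄 : Struc 𝒱 A) : Formula 𝒱 Vars → (Vars → A) → Prop
  | .rel R v, ν => 𝔄 R (fun i => ν (v i))
  | .nrel R v, ν => ¬ 𝔄 R (fun i => ν (v i))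
  | .equal x y, ν => ν x = ν y
  | .nequal x y, ν => ν x ≠ ν y
  | .and φ ψ, ν => Sat 𝔄 φ ν ∧ Sat 𝔄 ψ ν
  | .or φ ψ, ν => Sat 𝔄 φ ν ∨ Sat 𝔄 ψ ν
  | .all x φ, ν => ∀ a : A, Sat 𝔄 φ (Function.update ν x a)
  | .ex x φ, ν => ∃ a : A, Sat 𝔄 φ (Function.update ν x a)
  | .not φ, ν => ¬ Sat 𝔄 φ ν

end Sat

section ModelDefining

variable {𝒱 : Vocab} {A K : Type} [CommSemiring K]

/-- A `K`-interpretation is model-defining if for each fact exactly one of the values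
assigned to it and to its negation is `0`. -/
def ModelDefining (π : Lit 𝒱 A → K) : Prop :=
  ∀ L : Lit 𝒱 A, (π L = 0 ∧ π L.neg ≠ 0) ∨ (π L ≠ 0 ∧ π L.neg = 0)

/-- The structure `𝔄_π` defined by a model-defining interpretation `π`:
it satisfies a literal `L` iff `π L ≠ 0`. -/
def StrucOf (π : Lit 𝒱 A → K) : Struc 𝒱 A := fun R a => π ⟨true, R, a⟩ ≠ 0

end ModelDefining

/-- A commutative semiring is positive if it is `+`-positive and has no divisors of zero. -/
def IsPositive (K : Type) [CommSemiring K] : Prop :=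
  (∀ a b : K, a + b = 0 → a = 0 ∧ b = 0) ∧ ∀ a b : K, a * b = 0 → a = 0 ∨ b = 0


open MvPolynomial

/-- Generating relation for the dual-indeterminate congruence: `p · p̄ = 0` for `p ∈ X`
(we realize the set of tokens `X ∪ X̄` as the sum type `X ⊕ X`, with `Sum.inl p = p`
and `Sum.inr p = p̄`). -/
def pairRel (X : Type) : MvPolynomial (X ⊕ X) ℕ → MvPolynomial (X ⊕ X) ℕ → Prop :=
  fun a b => b = 0 ∧ ∃ p : X, a = MvPolynomial.X (Sum.inl p) * MvPolynomial.X (Sum.inr p)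

/-- The semiring congruence on `ℕ[X ∪ X̄]` generated by `p · p̄ = 0` for all `p ∈ X`. -/
noncomputable def dualCon (X : Type) : RingCon (MvPolynomial (X ⊕ X) ℕ) := ringConGen (pairRel X)

/-- `ℕ[X,X̄]`: the commutative semiring of dual-indeterminate polynomials, i.e. the
quotient of the polynomial semiring `ℕ[X ∪ X̄]` by the congruence `p · p̄ = 0`. -/
abbrev DualPoly (X : Type) := (dualCon X).Quotient

/-- The image in `ℕ[X,X̄]` of a provenance token `x ∈ X ∪ X̄`. -/
noncomputable def tok {X : Type} (x : X ⊕ X) : DualPoly X :=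
  ((MvPolynomial.X x : MvPolynomial (X ⊕ X) ℕ) : DualPoly X)

open Classical in
/-- Deleting from a polynomial all monomials that contain a pair of complementary tokens. -/
noncomputable def clean {X : Type} (q : MvPolynomial (X ⊕ X) ℕ) : MvPolynomial (X ⊕ X) ℕ :=
  ∑ m ∈ q.support.filter
      (fun m => ¬ ∃ p : X, m (Sum.inl p) ≠ 0 ∧ m (Sum.inr p) ≠ 0),
    MvPolynomial.monomial m (q.coeff m)

/-- A representative polynomial of an element of `ℕ[X,X̄]`. -/
noncomputable def qrep {X : Type} (q : DualPoly X) : MvPolynomial (X ⊕ X) ℕ :=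
  (Quot.exists_rep q).choose

/-- The coefficient of the monomial `m` in a dual-indeterminate polynomial:
the coefficient of `m` in the canonical (clean) representative. -/
noncomputable def coeffQ {X : Type} (q : DualPoly X) (m : (X ⊕ X) →₀ ℕ) : ℕ :=
  (clean (qrep q)).coeff m

/-- The sum of the monomial coefficients of a dual-indeterminate polynomial. -/
noncomputable def sumCoeff {X : Type} (q : DualPoly X) : ℕ :=
  ∑ m ∈ (clean (qrep q)).support, (clean (qrep q)).coeff m


section DualInterp

variable {𝒱 : Vocab} {A X : Type}

/-- A provenance-tracking interpretation: positive facts are annotated with positive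
tokens (or `0`, `1`), negative facts with negative tokens (or `0`, `1`), with the
convention that the complementary token `p̄` may only annotate the negation of the
fact annotated by `p` (and vice versa). -/
def ProvTracking (π : Lit 𝒱 A → DualPoly X) : Prop :=
  (∀ L : Lit 𝒱 A, L.pos = true → π L = 0 ∨ π L = 1 ∨ ∃ p : X, π L = tok (Sum.inl p)) ∧
  (∀ L : Lit 𝒱 A, L.pos = false → π L = 0 ∨ π L = 1 ∨ ∃ p : X, π L = tok (Sum.inr p)) ∧
  (∀ L L' : Lit 𝒱 A, ∀ p : X,
     π L = tok (Sum.inl p) → π L' = tok (Sum.inr p) → L' = L.neg)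

/-- A model-compatible interpretation: each fact is either tracked by a pair of
complementary tokens `z`, `z̄` (a distinct pair for each tracked fact), or is
annotated by `0` and `1` (untracked false fact) or by `1` and `0` (untracked true
fact). -/
def ModelCompatible (π : Lit 𝒱 A → DualPoly X) : Prop :=
  (∀ L : Lit 𝒱 A, L.pos = true →
      (∃ z : X, π L = tok (Sum.inl z) ∧ π L.neg = tok (Sum.inr z)) ∨
      (π L = 0 ∧ π L.neg = 1) ∨ (π L = 1 ∧ π L.neg = 0)) ∧
  (∀ L L' : Lit 𝒱 A, ∀ z : X, π L = tok (Sum.inl z) → π L' = tok (Sum.inl z) → L = L')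

/-- A structure `𝔄` (with the same universe `A`) is compatible with `π` if `𝔄 ⊨ L`
for every literal `L` with `π L = 1`. -/
def Compatible (π : Lit 𝒱 A → DualPoly X) (𝔄 : Struc 𝒱 A) : Prop :=
  ∀ L : Lit 𝒱 A, π L = 1 → 𝔄.SatLit L

open Classical in
/-- The specialization `π↓𝔄` of an interpretation `π` with respect to a structure `𝔄`:
`π↓𝔄(L) = π(L)` if `𝔄 ⊨ L` and `π↓𝔄(L) = 0` otherwise. -/
noncomputable def specialize {K : Type} [CommSemiring K] (π : Lit 𝒱 A → K)
    (𝔄 : Struc 𝒱 A) : Lit 𝒱 A → K :=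
  fun L => if 𝔄.SatLit L then π L else 0

end DualInterp

/-!
A Boolean assignment `b` of the tokens, read so that `p̄` is the complement of `p`, kills every
`p·p̄` and therefore induces a semiring homomorphism `ℕ[X,X̄] → ℕ`. Composed with a
model-compatible `π` it yields a model-defining `ℕ`-interpretation, and in a positive semiring a
model-defining interpretation evaluates a formula to a nonzero value exactly when the structure it
defines satisfies the formula. The structures compatible with `π` are exactly the ones defined in
this way, and a nonzero `q ∈ ℕ[X,X̄]` keeps a monomial without a complementary pair, which survives
the evaluation at the assignment making exactly its positive tokens true.
-/
section Negation

variable {𝒱 : Vocab} {Vars A : Type} [DecidableEq Vars]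

theorem sat_nnf_and_sat_nnfNeg (𝔄 : Struc 𝒱 A) (φ : Formula 𝒱 Vars) (ν : Vars → A) :
    (Sat 𝔄 φ.nnf ν ↔ Sat 𝔄 φ ν) ∧ (Sat 𝔄 φ.nnfNeg ν ↔ ¬ Sat 𝔄 φ ν) := by
  induction φ generalizing ν <;>
    simp_all [Formula.nnf, Formula.nnfNeg, Sat, imp_iff_not_or, not_or, not_forall,
      not_exists]

theorem sat_nnfNeg (𝔄 : Struc 𝒱 A) (φ : Formula 𝒱 Vars) (ν : Vars → A) :
    Sat 𝔄 φ.nnfNeg ν ↔ ¬ Sat 𝔄 φ ν :=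
  (sat_nnf_and_sat_nnfNeg 𝔄 φ ν).2

end Negation

theorem isPositive_nat : IsPositive ℕ :=
  ⟨fun _ _ => Nat.add_eq_zero_iff.1, fun _ _ => Nat.mul_eq_zero.1⟩

namespace IsPositive

variable {K : Type} [CommSemiring K]

theorem add_eq_zero_iff (hK : IsPositive K) {a b : K} : a + b = 0 ↔ a = 0 ∧ b = 0 :=
  ⟨hK.1 a b, fun h => by rw [h.1, h.2, add_zero]⟩

theorem sum_eq_zero_iff (hK : IsPositive K) {ι : Type} (s : Finset ι) (f : ι → K) :
    ∑ i ∈ s, f i = 0 ↔ ∀ i ∈ s, f i = 0 := by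
  classical
  induction s using Finset.induction_on with
  | empty => simp
  | insert a s ha ih =>
    rw [Finset.sum_insert ha, Finset.forall_mem_insert, ← ih]
    exact hK.add_eq_zero_iff

theorem noZeroDivisors (hK : IsPositive K) : NoZeroDivisors K :=
  ⟨fun h => hK.2 _ _ h⟩

end IsPositive

section ModelDefining

variable {𝒱 : Vocab} {A K : Type} [CommSemiring K] {π : Lit 𝒱 A → K}

theorem ModelDefining.satLit_strucOf_iff (hπ : ModelDefining π) (L : Lit 𝒱 A) :
    (StrucOf π).SatLit L ↔ π L ≠ 0 := by
  rcases L with ⟨_ | _, R, a⟩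
  · have := hπ ⟨false, R, a⟩
    simp only [Lit.neg, Bool.not_false] at this
    simp only [Struc.SatLit, StrucOf, Bool.false_eq_true, if_false]
    tauto
  · exact Iff.rfl

theorem ModelDefining.eq_strucOf (hπ : ModelDefining π) {𝔄 : Struc 𝒱 A}
    (h : ∀ L, 𝔄.SatLit L → π L ≠ 0) : 𝔄 = StrucOf π := by
  funext R a
  refine propext ⟨h ⟨true, R, a⟩, fun hR => by_contra fun hn => ?_⟩
  have hneg := h ⟨false, R, a⟩ (by simpa [Struc.SatLit] using hn)
  rcases hπ ⟨false, R, a⟩ with ⟨h0, _⟩ | ⟨_, h0⟩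
  · exact hneg h0
  · exact hR h0

variable {Vars : Type} [DecidableEq Vars] [Fintype A] [DecidableEq A]

theorem sat_strucOf_iff_eval_ne_zero [Nontrivial K] (hK : IsPositive K)
    (hπ : ModelDefining π) (φ : Formula 𝒱 Vars) (ν : Vars → A) :
    Sat (StrucOf π) φ ν ↔ eval π φ ν ≠ 0 := by
  have := hK.noZeroDivisors
  induction φ, ν using eval.induct with
  | case1 R v ν => rw [Sat, _root_.eval]; rfl
  | case2 R v ν => rw [Sat, _root_.eval]; exact hπ.satLit_strucOf_iff ⟨false, R, _⟩
  | case7 φ ψ ν ihφ ihψ => simp [Sat, _root_.eval, ihφ, ihψ]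
  | case8 φ ψ ν ihφ ihψ =>
    simp [Sat, _root_.eval, ihφ, ihψ, hK.add_eq_zero_iff, imp_iff_not_or]
  | case9 x φ ν ih => simp [Sat, _root_.eval, ih, Finset.prod_ne_zero_iff]
  | case10 x φ ν ih => simp [Sat, _root_.eval, ih, hK.sum_eq_zero_iff]
  | case11 φ ν ih => rw [Sat, _root_.eval, ← sat_nnfNeg]; exact ih
  | _ => simp_all [Sat, _root_.eval]

end ModelDefining

theorem eval_comp_ringHom {𝒱 : Vocab} {Vars A K K' : Type} [DecidableEq Vars] [Fintype A]
    [DecidableEq A] [CommSemiring K] [CommSemiring K'] (g : K →+* K') (π : Lit 𝒱 A → K)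
    (φ : Formula 𝒱 Vars) (ν : Vars → A) : eval (g ∘ π) φ ν = g (eval π φ ν) := by
  induction φ, ν using eval.induct <;> simp_all [_root_.eval, map_prod, map_sum]

namespace DualPoly

variable {X : Type}

def boolVal (b : X → Bool) : X ⊕ X → ℕ :=
  Sum.elim (fun p => (b p).toNat) (fun p => (!b p).toNat)

noncomputable def evalBool (b : X → Bool) : DualPoly X →+* ℕ :=
  (dualCon X).lift (eval (boolVal b)) <| RingCon.ringConGen_le.2 <| by
    rintro _ _ ⟨rfl, p, rfl⟩
    cases b p <;> simp [boolVal]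

theorem evalBool_mk (b : X → Bool) (f : MvPolynomial (X ⊕ X) ℕ) :
    evalBool b ((dualCon X).mk' f) = eval (boolVal b) f :=
  rfl

theorem evalBool_tok (b : X → Bool) (x : X ⊕ X) : evalBool b (tok x) = boolVal b x :=
  eval_X _

theorem mk_monomial_eq_zero {m : (X ⊕ X) →₀ ℕ} (c : ℕ) {p : X} (hl : m (.inl p) ≠ 0)
    (hr : m (.inr p) ≠ 0) : (dualCon X).mk' (monomial m c) = 0 := by
  have hdvd : MvPolynomial.X (.inl p) * MvPolynomial.X (.inr p) ∣ monomial m c := by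
    rw [MvPolynomial.X, MvPolynomial.X, monomial_mul, monomial_dvd_monomial]
    refine ⟨Or.inr fun x => ?_, one_dvd c⟩
    rcases x with q | q <;> by_cases hq : q = p <;> simp [hq] <;> omega
  have hzero : (dualCon X).mk' (MvPolynomial.X (.inl p) * MvPolynomial.X (.inr p)) = 0 :=
    Quotient.sound (RingConGen.Rel.of _ _ ⟨rfl, p, rfl⟩)
  simpa [hzero] using map_dvd (dualCon X).mk' hdvd

open Classical in
theorem coeff_clean (f : MvPolynomial (X ⊕ X) ℕ) (m : (X ⊕ X) →₀ ℕ) :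
    (clean f).coeff m =
      if ¬ ∃ p : X, m (.inl p) ≠ 0 ∧ m (.inr p) ≠ 0 then f.coeff m else 0 := by
  by_cases hm : m ∈ f.support <;>
    simp_all [clean, coeff_sum, coeff_monomial, Finset.sum_ite_eq']

theorem mk_clean (f : MvPolynomial (X ⊕ X) ℕ) :
    (dualCon X).mk' (clean f) = (dualCon X).mk' f := by
  classical
  conv_rhs => rw [f.as_sum, ← Finset.sum_filter_add_sum_filter_not f.support
    (fun m => ∃ p : X, m (.inl p) ≠ 0 ∧ m (.inr p) ≠ 0)]
  rw [map_add, map_sum, Finset.sum_eq_zero fun m hm => ?_, zero_add, clean]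
  obtain ⟨p, hl, hr⟩ := (Finset.mem_filter.1 hm).2
  exact mk_monomial_eq_zero _ hl hr

theorem boolVal_eq_one_of_mem_support {m : (X ⊕ X) →₀ ℕ}
    (hm : ¬ ∃ p : X, m (.inl p) ≠ 0 ∧ m (.inr p) ≠ 0) {i : X ⊕ X} (hi : i ∈ m.support) :
    boolVal (fun p => decide (m (.inl p) ≠ 0)) i = 1 := by
  rw [Finsupp.mem_support_iff] at hi
  rcases i with p | p
  · simp [boolVal, hi]
  · have hl : m (.inl p) = 0 := by_contra fun hl => hm ⟨p, hl, hi⟩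
    simp [boolVal, hl]

theorem eval_boolVal_ne_zero {f : MvPolynomial (X ⊕ X) ℕ} {m : (X ⊕ X) →₀ ℕ}
    (hf : f.coeff m ≠ 0) (hm : ¬ ∃ p : X, m (.inl p) ≠ 0 ∧ m (.inr p) ≠ 0) :
    eval (boolVal fun p => decide (m (.inl p) ≠ 0)) f ≠ 0 := by
  rw [eval_eq, Ne, Finset.sum_eq_zero_iff]
  intro h
  have hterm := h m (mem_support_iff.2 hf)
  rw [Finset.prod_eq_one fun i hi => by rw [boolVal_eq_one_of_mem_support hm hi, one_pow],
    mul_one] at hterm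
  exact hf hterm

theorem exists_evalBool_ne_zero {q : DualPoly X} (hq : q ≠ 0) : ∃ b, evalBool b q ≠ 0 := by
  classical
  obtain ⟨f, rfl⟩ := (dualCon X).mk'_surjective q
  rw [← mk_clean] at hq ⊢
  obtain ⟨m, hm⟩ : ∃ m, (clean f).coeff m ≠ 0 := by
    by_contra! h
    exact hq (by rw [MvPolynomial.ext _ 0 h, map_zero])
  have hclean : ¬ ∃ p : X, m (.inl p) ≠ 0 ∧ m (.inr p) ≠ 0 := by
    by_contra h
    simp [coeff_clean, h] at hm
  exact ⟨_, by rw [evalBool_mk]; exact eval_boolVal_ne_zero hm hclean⟩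

end DualPoly

section ModelCompatible

variable {𝒱 : Vocab} {A X : Type}

open DualPoly

theorem Lit.neg_neg (L : Lit 𝒱 A) : L.neg.neg = L := by
  cases L; simp [Lit.neg]

theorem Struc.satLit_neg (𝔄 : Struc 𝒱 A) (L : Lit 𝒱 A) : 𝔄.SatLit L.neg ↔ ¬ 𝔄.SatLit L := by
  rcases L with ⟨_ | _, R, a⟩ <;> simp [Lit.neg, Struc.SatLit]

variable {π : Lit 𝒱 A → DualPoly X}

theorem ModelCompatible.cases (hπ : ModelCompatible π) (L : Lit 𝒱 A) :
    (∃ z, π L = tok (.inl z) ∧ π L.neg = tok (.inr z)) ∨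
    (∃ z, π L = tok (.inr z) ∧ π L.neg = tok (.inl z)) ∨
    (π L = 0 ∧ π L.neg = 1) ∨ (π L = 1 ∧ π L.neg = 0) := by
  cases hL : L.pos
  · rcases hπ.1 L.neg (by simp [Lit.neg, hL]) with ⟨z, h, hneg⟩ | ⟨h, hneg⟩ | ⟨h, hneg⟩ <;>
      rw [Lit.neg_neg] at hneg
    · exact .inr (.inl ⟨z, hneg, h⟩)
    · exact .inr (.inr (.inr ⟨hneg, h⟩))
    · exact .inr (.inr (.inl ⟨hneg, h⟩))
  · rcases hπ.1 L hL with h | h | h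
    · exact .inl h
    · exact .inr (.inr (.inl h))
    · exact .inr (.inr (.inr h))

theorem ModelCompatible.modelDefining_evalBool (hπ : ModelCompatible π) (b : X → Bool) :
    ModelDefining (evalBool b ∘ π) := by
  intro L
  rcases hπ.cases L with ⟨z, h, hneg⟩ | ⟨z, h, hneg⟩ | ⟨h, hneg⟩ | ⟨h, hneg⟩
  · cases b z <;> simp [h, hneg, evalBool_tok, boolVal]
  · cases b z <;> simp [h, hneg, evalBool_tok, boolVal]
  · simp [h, hneg]
  · simp [h, hneg]

open Classical in
noncomputable def tokenAssignment (π : Lit 𝒱 A → DualPoly X) (𝔄 : Struc 𝒱 A) : X → Bool :=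
  fun z => decide (∃ L, π L = tok (.inl z) ∧ 𝔄.SatLit L)

theorem ModelCompatible.evalBool_tokenAssignment_ne_zero (hπ : ModelCompatible π)
    {𝔄 : Struc 𝒱 A} (h𝔄 : Compatible π 𝔄) {L : Lit 𝒱 A} (hL : 𝔄.SatLit L) :
    evalBool (tokenAssignment π 𝔄) (π L) ≠ 0 := by
  rcases hπ.cases L with ⟨z, h, -⟩ | ⟨z, h, hneg⟩ | ⟨-, hneg⟩ | ⟨h, -⟩
  · have hz : tokenAssignment π 𝔄 z = true := by
      simpa [tokenAssignment] using ⟨L, h, hL⟩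
    simp [h, evalBool_tok, boolVal, hz]
  · have hz : tokenAssignment π 𝔄 z = false := by
      simp only [tokenAssignment, decide_eq_false_iff_not]
      rintro ⟨L', h', hL'⟩
      rw [hπ.2 L' L.neg z h' hneg, Struc.satLit_neg] at hL'
      exact hL' hL
    simp [h, evalBool_tok, boolVal, hz]
  · exact absurd hL ((𝔄.satLit_neg L).1 (h𝔄 _ hneg))
  · simp [h]

end ModelCompatible

/-- for a model-compatible interpretation `π` and a sentence `φ`,
`φ` is `Mod_π`-satisfiable iff `π⟦φ⟧ ≠ 0`. -/
theorem modPi_satisfiable_iff {𝒱 : Vocab} {Vars A X : Type} [DecidableEq Vars]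
    [Fintype A] [DecidableEq A] [Nonempty A]
    (π : Lit 𝒱 A → DualPoly X) (hπ : ModelCompatible π)
    (φ : Formula 𝒱 Vars) (hφ : φ.FV = ∅) (ν : Vars → A) :
    (∃ 𝔄 : Struc 𝒱 A, Compatible π 𝔄 ∧ Sat 𝔄 φ ν) ↔ eval π φ ν ≠ 0 := by
  constructor
  · rintro ⟨𝔄, h𝔄, hsat⟩
    have hmd := hπ.modelDefining_evalBool (tokenAssignment π 𝔄)
    have h𝔄_eq := hmd.eq_strucOf fun _ hL => hπ.evalBool_tokenAssignment_ne_zero h𝔄 hL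
    rw [h𝔄_eq, sat_strucOf_iff_eval_ne_zero isPositive_nat hmd, eval_comp_ringHom] at hsat
    exact fun h => hsat (by rw [h, map_zero])
  · intro h
    obtain ⟨b, hb⟩ := DualPoly.exists_evalBool_ne_zero h
    have hmd := hπ.modelDefining_evalBool b
    refine ⟨StrucOf (DualPoly.evalBool b ∘ π), fun L hL => ?_, ?_⟩
    · simp [hmd.satLit_strucOf_iff, hL]
    · rwa [sat_strucOf_iff_eval_ne_zero isPositive_nat hmd, eval_comp_ringHom]
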